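/- Let V be a finite-dimensional real inner product space and g ∈ ℝ with |g| < 2; set h = √(1 − g²/4). For a vector c ∈ V and y ∈ V define b_c(y) = ⟨c,y⟩, q_c(y) = √(‖y‖² − ⟨c,y⟩²), A_c(y) = ⟨c,y⟩ + (g/2)q_c(y), B_c(y) = ⟨c,y⟩² + g⟨c,y⟩q_c(y) + q_c(y)², and Λ(c; y₁,y₂) = (A_c(y₁)A_c(y₂) + h²(⟨y₁,y₂⟩ − ⟨c,y₁⟩⟨c,y₂⟩))/√(B_c(y₁)B_c(y₂)). Fix y₁, y₂ and a point c = b where q_b(y₁) > 0, q_b(y₂) > 0, B_b(y₁) > 0, B_b(y₂) > 0. Then c ↦ Λ(c; y₁,y₂) is differentiable at b and its derivative applied to w ∈ V equals c₁·⟨y₁,w⟩ + c₂·⟨y₂,w⟩, where c₁ = (g/(2q₁))·[(q₁q₂ − b₁b₂ + (g/2)(q₁b₂ − q₂b₁))/√(B₁B₂) − λ(q₁² − b₁²)/B₁], c₂ is obtained from c₁ by interchanging the subscripts 1 and 2, and qₐ = q_b(yₐ), bₐ = ⟨b,yₐ⟩, Bₐ = B_b(yₐ) for a = 1,2, λ =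 Λ(b; y₁,y₂). -/

import Mathlib

/-!
Each of `q_c(y)`, `A_c(y)`, `B_c(y)` depends on the axis `c` only through `t = ⟪c, y⟫`, so they are
one-variable functions of `t` composed with the linear form `⟪·, y⟫`, and `Λ` is a quotient
`N / √(B₁ B₂)` of such compositions. The chain rule gives `dq/dt = -t/q`, `dA/dt = 1 - g t/(2q)` and
`dB/dt = g (q² - t²)/q`, and the quotient rule `d(N/√D) = (dN - N dD/(2D))/√D` then produces the
stated coefficients once `h²` is replaced by `1 - g²/4`.
-/

open scoped InnerProductSpace

theorem HasFDerivAt.div_sqrt {E : Type*} [NormedAddCommGroup E] [NormedSpace ℝ E]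
    {f g : E → ℝ} {f' g' : E →L[ℝ] ℝ} {x : E}
    (hf : HasFDerivAt f f' x) (hg : HasFDerivAt g g' x) (hx : 0 < g x) :
    HasFDerivAt (fun y => f y / √(g y)) ((√(g x))⁻¹ • (f' - (f x / (2 * g x)) • g')) x := by
  have hs : 0 < √(g x) := Real.sqrt_pos.mpr hx
  have hinv := (hasDerivAt_inv hs.ne').comp_hasFDerivAt x (hg.sqrt hx.ne')
  refine (hf.mul hinv).congr_fderiv ?_
  ext v
  simp only [Function.comp_apply, add_apply, smul_apply,
    sub_apply, smul_eq_mul, Real.sq_sqrt hx.le]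
  field_simp
  ring

section InnerLeft

variable {V : Type*} [NormedAddCommGroup V] [InnerProductSpace ℝ V]

theorem hasFDerivAt_inner_left (y b : V) :
    HasFDerivAt (fun c : V => ⟪c, y⟫_ℝ) (innerSL ℝ y) b := by
  have hl : (fun c : V => ⟪c, y⟫_ℝ) = innerSL ℝ y := funext fun c => (real_inner_comm c y).symm
  exact hl ▸ (innerSL ℝ y).hasFDerivAt

theorem HasDerivAt.hasFDerivAt_comp_inner_left {φ : ℝ → ℝ} {φ' : ℝ} {y b : V}
    (hφ : HasDerivAt φ φ' ⟪b, y⟫_ℝ) :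
    HasFDerivAt (fun c : V => φ ⟪c, y⟫_ℝ) (φ' • innerSL ℝ y) b :=
  hφ.comp_hasFDerivAt b (hasFDerivAt_inner_left y b)

end InnerLeft

namespace Finsleroid

noncomputable section

-- `r` stands for `‖y‖²` and `t` for `⟪c, y⟫`.
def q (r t : ℝ) : ℝ := √(r - t ^ 2)
def A (g r t : ℝ) : ℝ := t + g / 2 * q r t
def B (g r t : ℝ) : ℝ := t ^ 2 + g * t * q r t + q r t ^ 2

variable {g r t : ℝ}

theorem hasDerivAt_q (ht : 0 < q r t) : HasDerivAt (q r) (-t / q r t) t := by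
  refine (((hasDerivAt_pow 2 t).const_sub r).sqrt (Real.sqrt_pos.mp ht).ne').congr_deriv ?_
  simp only [q]
  field_simp
  ring

theorem hasDerivAt_A (ht : 0 < q r t) : HasDerivAt (A g r) (1 - g * t / (2 * q r t)) t := by
  refine ((hasDerivAt_id t).add ((hasDerivAt_q ht).const_mul (g / 2))).congr_deriv ?_
  field_simp
  ring

theorem hasDerivAt_B (ht : 0 < q r t) :
    HasDerivAt (B g r) (g * (q r t ^ 2 - t ^ 2) / q r t) t := by
  have hq := hasDerivAt_q ht
  refine ((((hasDerivAt_id t).pow 2).add (((hasDerivAt_id t).const_mul g).mul hq)).add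
    (hq.pow 2)).congr_deriv ?_
  simp only [id]
  field_simp
  ring

variable {V : Type*} [NormedAddCommGroup V] [InnerProductSpace ℝ V]

def lam (g h : ℝ) (c y₁ y₂ : V) : ℝ :=
  (A g (‖y₁‖ ^ 2) ⟪c, y₁⟫_ℝ * A g (‖y₂‖ ^ 2) ⟪c, y₂⟫_ℝ + h ^ 2 * (⟪y₁, y₂⟫_ℝ - ⟪c, y₁⟫_ℝ * ⟪c, y₂⟫_ℝ))
    / √(B g (‖y₁‖ ^ 2) ⟪c, y₁⟫_ℝ * B g (‖y₂‖ ^ 2) ⟪c, y₂⟫_ℝ)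

def lamPartial (g q₁ q₂ b₁ b₂ B₁ B₂ lam : ℝ) : ℝ :=
  (g / (2 * q₁)) * ((q₁ * q₂ - b₁ * b₂ + (g / 2) * (q₁ * b₂ - q₂ * b₁)) / √(B₁ * B₂)
    - lam * (q₁ ^ 2 - b₁ ^ 2) / B₁)

theorem hasFDerivAt_lam {h : ℝ} (hh : h ^ 2 = 1 - g ^ 2 / 4) {y₁ y₂ b : V}
    (hq₁ : 0 < q (‖y₁‖ ^ 2) ⟪b, y₁⟫_ℝ) (hq₂ : 0 < q (‖y₂‖ ^ 2) ⟪b, y₂⟫_ℝ)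
    (hB₁ : 0 < B g (‖y₁‖ ^ 2) ⟪b, y₁⟫_ℝ) (hB₂ : 0 < B g (‖y₂‖ ^ 2) ⟪b, y₂⟫_ℝ) :
    HasFDerivAt (fun c => lam g h c y₁ y₂)
      (lamPartial g (q (‖y₁‖ ^ 2) ⟪b, y₁⟫_ℝ) (q (‖y₂‖ ^ 2) ⟪b, y₂⟫_ℝ) ⟪b, y₁⟫_ℝ ⟪b, y₂⟫_ℝ
          (B g (‖y₁‖ ^ 2) ⟪b, y₁⟫_ℝ) (B g (‖y₂‖ ^ 2) ⟪b, y₂⟫_ℝ) (lam g h b y₁ y₂) • innerSL ℝ y₁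
        + lamPartial g (q (‖y₂‖ ^ 2) ⟪b, y₂⟫_ℝ) (q (‖y₁‖ ^ 2) ⟪b, y₁⟫_ℝ) ⟪b, y₂⟫_ℝ ⟪b, y₁⟫_ℝ
          (B g (‖y₂‖ ^ 2) ⟪b, y₂⟫_ℝ) (B g (‖y₁‖ ^ 2) ⟪b, y₁⟫_ℝ) (lam g h b y₁ y₂) • innerSL ℝ y₂) b := by
  have hnum := ((hasDerivAt_A (g := g) hq₁).hasFDerivAt_comp_inner_left.mul
    (hasDerivAt_A (g := g) hq₂).hasFDerivAt_comp_inner_left).add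
    (((hasFDerivAt_const ⟪y₁, y₂⟫_ℝ b).sub
      ((hasFDerivAt_inner_left y₁ b).mul (hasFDerivAt_inner_left y₂ b))).const_mul (h ^ 2))
  have hden := (hasDerivAt_B (g := g) hq₁).hasFDerivAt_comp_inner_left.mul
    (hasDerivAt_B (g := g) hq₂).hasFDerivAt_comp_inner_left
  refine (hnum.div_sqrt hden (mul_pos hB₁ hB₂)).congr_fderiv ?_
  have hS : 0 < √(B g (‖y₁‖ ^ 2) ⟪b, y₁⟫_ℝ * B g (‖y₂‖ ^ 2) ⟪b, y₂⟫_ℝ) :=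
    Real.sqrt_pos.mpr (mul_pos hB₁ hB₂)
  ext w
  simp only [add_apply, smul_apply, sub_apply, zero_apply, smul_eq_mul, Pi.mul_apply,
    Pi.add_apply, Pi.sub_apply, lamPartial, lam, A, hh, mul_comm (B g (‖y₂‖ ^ 2) _)]
  generalize √(B g (‖y₁‖ ^ 2) ⟪b, y₁⟫_ℝ * B g (‖y₂‖ ^ 2) ⟪b, y₂⟫_ℝ) = S at hS ⊢
  field_simp
  ring

end

end Finsleroid

theorem finsleroid_lambda_axis_derivative_general
    {V : Type*} [NormedAddCommGroup V] [InnerProductSpace ℝ V]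
    (g h : ℝ) (hg : |g| < 2) (hh : h = Real.sqrt (1 - g ^ 2 / 4))
    (qc Ac Bc : V → V → ℝ) (Lam : V → V → V → ℝ)
    (hqc : ∀ c y : V, qc c y = Real.sqrt (‖y‖ ^ 2 - ⟪c, y⟫_ℝ ^ 2))
    (hAc : ∀ c y : V, Ac c y = ⟪c, y⟫_ℝ + (g / 2) * qc c y)
    (hBc : ∀ c y : V, Bc c y = ⟪c, y⟫_ℝ ^ 2 + g * ⟪c, y⟫_ℝ * qc c y + qc c y ^ 2)
    (hLam : ∀ c y₁ y₂ : V,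
      Lam c y₁ y₂ = (Ac c y₁ * Ac c y₂ + h ^ 2 * (⟪y₁, y₂⟫_ℝ - ⟪c, y₁⟫_ℝ * ⟪c, y₂⟫_ℝ))
        / Real.sqrt (Bc c y₁ * Bc c y₂))
    (y₁ y₂ b : V)
    (hq₁ : 0 < qc b y₁) (hq₂ : 0 < qc b y₂)
    (hB₁ : 0 < Bc b y₁) (hB₂ : 0 < Bc b y₂)
    (q₁ q₂ b₁ b₂ B₁ B₂ lam c₁ c₂ : ℝ)
    (hq₁' : q₁ = qc b y₁) (hq₂' : q₂ = qc b y₂)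
    (hb₁ : b₁ = ⟪b, y₁⟫_ℝ) (hb₂ : b₂ = ⟪b, y₂⟫_ℝ)
    (hB₁' : B₁ = Bc b y₁) (hB₂' : B₂ = Bc b y₂)
    (hlam' : lam = Lam b y₁ y₂)
    (hc₁ : c₁ = (g / (2 * q₁))
      * ((q₁ * q₂ - b₁ * b₂ + (g / 2) * (q₁ * b₂ - q₂ * b₁)) / Real.sqrt (B₁ * B₂)
          - lam * (q₁ ^ 2 - b₁ ^ 2) / B₁))
    (hc₂ : c₂ = (g / (2 * q₂))
      * ((q₂ * q₁ - b₂ * b₁ + (g / 2) * (q₂ * b₁ - q₁ * b₂)) / Real.sqrt (B₂ * B₁)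
          - lam * (q₂ ^ 2 - b₂ ^ 2) / B₂)) :
    DifferentiableAt ℝ (fun c => Lam c y₁ y₂) b ∧
      ∀ w : V, fderiv ℝ (fun c => Lam c y₁ y₂) b w = c₁ * ⟪y₁, w⟫_ℝ + c₂ * ⟪y₂, w⟫_ℝ := by
  subst hq₁' hq₂' hb₁ hb₂ hB₁' hB₂' hlam' hc₁ hc₂
  obtain rfl : qc = fun c y => Finsleroid.q (‖y‖ ^ 2) ⟪c, y⟫_ℝ := funext₂ hqc
  obtain rfl : Ac = fun c y => Finsleroid.A g (‖y‖ ^ 2) ⟪c, y⟫_ℝ := funext₂ hAc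
  obtain rfl : Bc = fun c y => Finsleroid.B g (‖y‖ ^ 2) ⟪c, y⟫_ℝ := funext₂ hBc
  obtain rfl : Lam = fun c y₁ y₂ => Finsleroid.lam g h c y₁ y₂ := funext₃ hLam
  have hh_sq : h ^ 2 = 1 - g ^ 2 / 4 := by
    rw [hh, Real.sq_sqrt]
    nlinarith [abs_lt.mp hg, sq_abs g]
  have hderiv := Finsleroid.hasFDerivAt_lam hh_sq hq₁ hq₂ hB₁ hB₂
  refine ⟨hderiv.differentiableAt, fun w => ?_⟩
  rw [hderiv.fderiv]
  simp only [add_apply, smul_apply, innerSL_apply_apply, smul_eq_mul]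
  rfl

/-- The Finsleroid quantity `Λ(c; y₁, y₂)`, regarded as a function of the
Finsleroid-axis vector `c` with the tangent vectors `y₁, y₂` fixed, is differentiable
at an axis point `b` where `q_b(y₁), q_b(y₂), B_b(y₁), B_b(y₂) > 0`, and its derivative
applied to `w` equals `c₁·⟨y₁,w⟩ + c₂·⟨y₂,w⟩` with the stated coefficients
`c₁ = (g/(2q₁))·[(q₁q₂ − b₁b₂ + (g/2)(q₁b₂ − q₂b₁))/√(B₁B₂) − λ(q₁² − b₁²)/B₁]`
and `c₂` obtained from `c₁` by interchanging the subscripts 1 and 2. -/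
theorem finsleroid_lambda_axis_derivative
    {V : Type*} [NormedAddCommGroup V] [InnerProductSpace ℝ V] [FiniteDimensional ℝ V]
    (g h : ℝ) (hg : |g| < 2) (hh : h = Real.sqrt (1 - g ^ 2 / 4))
    (qc Ac Bc : V → V → ℝ) (Lam : V → V → V → ℝ)
    (hqc : ∀ c y : V, qc c y = Real.sqrt (‖y‖ ^ 2 - ⟪c, y⟫_ℝ ^ 2))
    (hAc : ∀ c y : V, Ac c y = ⟪c, y⟫_ℝ + (g / 2) * qc c y)
    (hBc : ∀ c y : V, Bc c y = ⟪c, y⟫_ℝ ^ 2 + g * ⟪c, y⟫_ℝ * qc c y + qc c y ^ 2)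
    (hLam : ∀ c y₁ y₂ : V,
      Lam c y₁ y₂ = (Ac c y₁ * Ac c y₂ + h ^ 2 * (⟪y₁, y₂⟫_ℝ - ⟪c, y₁⟫_ℝ * ⟪c, y₂⟫_ℝ))
        / Real.sqrt (Bc c y₁ * Bc c y₂))
    (y₁ y₂ b : V)
    (hq₁ : 0 < qc b y₁) (hq₂ : 0 < qc b y₂)
    (hB₁ : 0 < Bc b y₁) (hB₂ : 0 < Bc b y₂)
    (q₁ q₂ b₁ b₂ B₁ B₂ lam c₁ c₂ : ℝ)
    (hq₁' : q₁ = qc b y₁) (hq₂' : q₂ = qc b y₂)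
    (hb₁ : b₁ = ⟪b, y₁⟫_ℝ) (hb₂ : b₂ = ⟪b, y₂⟫_ℝ)
    (hB₁' : B₁ = Bc b y₁) (hB₂' : B₂ = Bc b y₂)
    (hlam' : lam = Lam b y₁ y₂)
    (hc₁ : c₁ = (g / (2 * q₁))
      * ((q₁ * q₂ - b₁ * b₂ + (g / 2) * (q₁ * b₂ - q₂ * b₁)) / Real.sqrt (B₁ * B₂)
          - lam * (q₁ ^ 2 - b₁ ^ 2) / B₁))
    (hc₂ : c₂ = (g / (2 * q₂))
      * ((q₂ * q₁ - b₂ * b₁ + (g / 2) * (q₂ * b₁ - q₁ * b₂)) / Real.sqrt (B₂ * B₁)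
          - lam * (q₂ ^ 2 - b₂ ^ 2) / B₂)) :
    DifferentiableAt ℝ (fun c => Lam c y₁ y₂) b ∧
      ∀ w : V, fderiv ℝ (fun c => Lam c y₁ y₂) b w = c₁ * ⟪y₁, w⟫_ℝ + c₂ * ⟪y₂, w⟫_ℝ :=
  finsleroid_lambda_axis_derivative_general g h hg hh qc Ac Bc Lam hqc hAc hBc hLam y₁ y₂ b hq₁ hq₂
    hB₁ hB₂ q₁ q₂ b₁ b₂ B₁ B₂ lam c₁ c₂ hq₁' hq₂' hb₁ hb₂ hB₁' hB₂' hlam' hc₁ hc₂
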